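/- arXiv:1606.02609 — 2 statements merged into one kernel-verified Lean document; each statement's English description precedes it below -/
import Mathlib

section
/- Let x, y, z be points in the hyperbolic plane ℍ² such that the angle of the triangle xyz at the vertex x is at least π/2. Then d(y,x) + d(x,z) ≤ d(y,z) + log(1+√2). -/
open UpperHalfPlane

/-- Let `x, y, z` be points in the hyperbolic plane `ℍ²` (here the upper half-plane model)
such that the angle of the triangle `xyz` at the vertex `x` is at least `π/2`.  By the
hyperbolic law of cosines `cosh d(y,z) = cosh d(y,x)·cosh d(x,z) − sinh d(y,x)·sinh d(x,z)·cos ∠x`,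
the angle condition `∠x ≥ π/2` is equivalent to `cosh d(y,x)·cosh d(x,z) ≤ cosh d(y,z)`.
Then `d(y,x) + d(x,z) ≤ d(y,z) + log(1+√2)`. -/
theorem hyperbolic_obtuse_triangle_ineq (x y z : UpperHalfPlane)
    (hangle : Real.cosh (dist y x) * Real.cosh (dist x z) ≤ Real.cosh (dist y z)) :
    dist y x + dist x z ≤ dist y z + Real.log (1 + Real.sqrt 2) := by
  set a := dist y x with ha
  set b := dist x z with hb
  set c := dist y z with hc
  have ha0 : 0 ≤ a := dist_nonneg
  have hb0 : 0 ≤ b := dist_nonneg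
  have hc0 : 0 ≤ c := dist_nonneg
  set L := Real.log (1 + Real.sqrt 2) with hL
  have hs : Real.sqrt 2 ^ 2 = 2 := Real.sq_sqrt (by norm_num)
  have hs1 : 1 ≤ Real.sqrt 2 := by nlinarith [Real.sqrt_nonneg 2]
  have hL0 : 0 ≤ L := Real.log_nonneg (by linarith)
  have hexpL : Real.exp L = 1 + Real.sqrt 2 := Real.exp_log (by linarith)
  have hexpnL : Real.exp (-L) = Real.sqrt 2 - 1 := by
    rw [Real.exp_neg, hexpL, inv_eq_iff_eq_inv, eq_comm, inv_eq_iff_eq_inv, eq_comm]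
    rw [eq_comm, inv_eq_one_div, eq_div_iff (by nlinarith)]
    nlinarith
  -- Step 1: cosh(a+b) ≤ 2 cosh c - 1
  have h1 : Real.cosh (a + b) ≤ 2 * Real.cosh c - 1 := by
    have h2 : 1 ≤ Real.cosh (a - b) := Real.one_le_cosh _
    have e1 := Real.cosh_add a b
    have e2 := Real.cosh_sub a b
    nlinarith [hangle]
  -- Step 2: 2 cosh c - 1 ≤ cosh (c + L)
  have h2 : 2 * Real.cosh c - 1 ≤ Real.cosh (c + L) := by
    have hu : 1 ≤ Real.exp c := Real.one_le_exp hc0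
    have hv : Real.exp (-c) ≤ 1 := Real.exp_le_one_iff.mpr (by linarith)
    rw [Real.cosh_eq, Real.cosh_eq, neg_add, Real.exp_add, Real.exp_add, hexpL, hexpnL]
    nlinarith [Real.exp_pos (-c)]
  have h3 : Real.cosh (a + b) ≤ Real.cosh (c + L) := by linarith
  have h4 : |a + b| ≤ |c + L| := Real.cosh_le_cosh.mp h3
  rw [abs_of_nonneg (by linarith), abs_of_nonneg (by linarith)] at h4
  linarith
end

section
/- Let f : ℝ^d → ℝ^d be a linear map whose image of the open unit ball 𝕂^d is contained in the closed Euclidean ball of radius λ < 1 centered at the origin. Then f restricted to 𝕂^d is λ-Lipschitz with respect to the hyperbolic metric of the Klein model. -/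
/-- `kleinDistRel x y r` says that `r` is the hyperbolic distance between `x` and `y`
in the Klein (projective) model (one-half the Hilbert metric of the unit ball). -/
def kleinDistRel {d : ℕ} (x y : EuclideanSpace ℝ (Fin d)) (r : ℝ) : Prop :=
  (x = y ∧ r = 0) ∨
  ∃ x' y' : EuclideanSpace ℝ (Fin d), ‖x'‖ = 1 ∧ ‖y'‖ = 1 ∧
    (∃ s : ℝ, s < 0 ∧ x' = x + s • (y - x)) ∧
    (∃ t : ℝ, 1 < t ∧ y' = x + t • (y - x)) ∧
    r = (1 / 2) * Real.log ((‖x - y'‖ * ‖y - x'‖) / (‖x - x'‖ * ‖y - y'‖))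

/-!
Everything happens on the line through `x` and `y` and on its image line. Parametrize the image
chord as `σ ↦ f x + σ • (f y - f x)`, with endpoints at `σ = s' < 0` and `σ = t' > 1`, and rescale
`[s', t']` affinely onto `[-1, 1]`. By Pythagoras about the midpoint of the chord, a point with
rescaled coordinate `ν` has squared norm at least `ν²`; as `f` maps the domain chord into the
`λ`-ball, the images of its endpoints have coordinates `-λ ≤ a < b ≤ λ`. Both distances are halves
of logarithms of cross ratios, which affine maps preserve, so the theorem reduces to the interval
case of Birkhoff's theorem, `log [-1, x, y, 1] ≤ λ log [a, x, y, b]`. In `y` the two sides have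
derivatives `2 / (1 - y²)` and `λ (b - a) / ((y - a) (b - y))`, and the second is the larger.
-/

open Real Set

noncomputable def crossRatio (a x y b : ℝ) : ℝ := (y - a) * (b - x) / ((x - a) * (b - y))

noncomputable def hilbertCoord (a b σ : ℝ) : ℝ := log (σ - a) - log (b - σ)

section Interval

variable {lam a b x y σ : ℝ}

lemma one_le_crossRatio (hax : a < x) (hxy : x ≤ y) (hyb : y < b) : 1 ≤ crossRatio a x y b := by
  rw [crossRatio, one_le_div (mul_pos (by linarith) (by linarith))]
  nlinarith

lemma log_crossRatio (hax : a < x) (hxy : x ≤ y) (hyb : y < b) :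
    log (crossRatio a x y b) = hilbertCoord a b y - hilbertCoord a b x := by
  rw [crossRatio, hilbertCoord, hilbertCoord, log_div (by nlinarith) (by nlinarith),
    log_mul (by linarith) (by linarith), log_mul (by linarith) (by linarith)]
  ring

lemma hasDerivAt_hilbertCoord (ha : a < σ) (hb : σ < b) :
    HasDerivAt (hilbertCoord a b) (1 / (σ - a) + 1 / (b - σ)) σ := by
  have h₁ := ((hasDerivAt_id σ).sub_const a).log (by simp; linarith)
  have h₂ := ((hasDerivAt_id σ).const_sub b).log (by simp; linarith)
  exact (h₁.sub h₂).congr_deriv (by simp only [id]; ring)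

lemma one_div_add_one_div_le_mul (hlam : lam < 1) (ha : -lam ≤ a) (haσ : a < σ)
    (hσb : σ < b) (hb : b ≤ lam) :
    1 / (σ + 1) + 1 / (1 - σ) ≤ lam * (1 / (σ - a) + 1 / (b - σ)) := by
  have hp : 0 < σ - a := by linarith
  have hq : 0 < b - σ := by linarith
  have hlam0 : 0 < lam := by linarith
  rw [div_add_div _ _ (by linarith) (by linarith), div_add_div _ _ hp.ne' hq.ne',
    mul_div_assoc', div_le_div_iff₀ (by nlinarith) (mul_pos hp hq)]
  -- `p q / (p + q)` is increasing in `p = σ - a ≤ λ + σ` and in `q = b - σ ≤ λ - σ`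
  have hharm : 2 * lam * ((σ - a) * (b - σ)) ≤ (lam ^ 2 - σ ^ 2) * (b - a) := by
    nlinarith [mul_nonneg (mul_nonneg hp.le (by linarith : 0 ≤ lam + σ))
        (by linarith : 0 ≤ lam - σ - (b - σ)),
      mul_nonneg (mul_nonneg hq.le (by linarith : 0 ≤ lam - σ))
        (by linarith : 0 ≤ lam + σ - (σ - a))]
  nlinarith [mul_nonneg (mul_nonneg hlam0.le (by linarith : 0 ≤ b - a)) (sq_nonneg σ),
    mul_nonneg (by nlinarith : 0 ≤ 1 - lam ^ 2)
      (mul_nonneg (sq_nonneg σ) (by linarith : 0 ≤ b - a))]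

theorem log_crossRatio_le_mul (hlam : lam < 1) (ha : -lam ≤ a) (hax : a < x) (hxy : x ≤ y)
    (hyb : y < b) (hb : b ≤ lam) :
    log (crossRatio (-1) x y 1) ≤ lam * log (crossRatio a x y b) := by
  set G := fun σ => lam * hilbertCoord a b σ - hilbertCoord (-1) 1 σ
  have hG : ∀ σ ∈ Ioo a b, HasDerivAt G
      (lam * (1 / (σ - a) + 1 / (b - σ)) - (1 / (σ - -1) + 1 / (1 - σ))) σ := fun σ hσ =>
    ((hasDerivAt_hilbertCoord hσ.1 hσ.2).const_mul lam).sub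
      (hasDerivAt_hilbertCoord (by linarith [hσ.1]) (by linarith [hσ.2]))
  have hmono : MonotoneOn G (Ioo a b) := by
    refine monotoneOn_of_hasDerivWithinAt_nonneg (convex_Ioo a b) (f' := fun σ =>
        lam * (1 / (σ - a) + 1 / (b - σ)) - (1 / (σ - -1) + 1 / (1 - σ)))
      (fun σ hσ => (hG σ hσ).continuousAt.continuousWithinAt) (fun σ hσ => ?_) (fun σ hσ => ?_)
    · rw [interior_Ioo] at hσ
      exact (hG σ hσ).hasDerivWithinAt
    · rw [interior_Ioo] at hσ
      rw [sub_neg_eq_add, sub_nonneg]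
      exact one_div_add_one_div_le_mul hlam ha hσ.1 hσ.2 hb
  have hGxy := hmono ⟨hax, hxy.trans_lt hyb⟩ ⟨hax.trans_le hxy, hyb⟩ hxy
  rw [log_crossRatio hax hxy hyb, log_crossRatio (by linarith) hxy (by linarith)]
  simp only [G] at hGxy
  linarith

end Interval

noncomputable def chordParam (s t σ : ℝ) : ℝ := (2 * σ - s - t) / (t - s)

section Chord

variable {s t : ℝ}

lemma chordParam_left (h : s ≠ t) : chordParam s t s = -1 := by
  rw [chordParam, div_eq_iff (sub_ne_zero.2 h.symm)]
  ring

lemma chordParam_right (h : s ≠ t) : chordParam s t t = 1 := by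
  rw [chordParam, div_eq_iff (sub_ne_zero.2 h.symm)]
  ring

lemma chordParam_strictMono (h : s < t) : StrictMono (chordParam s t) := fun σ τ hστ => by
  unfold chordParam
  gcongr

lemma crossRatio_chordParam (h : s ≠ t) (a x y b : ℝ) :
    crossRatio (chordParam s t a) (chordParam s t x) (chordParam s t y) (chordParam s t b) =
      crossRatio a x y b := by
  have hts : t - s ≠ 0 := sub_ne_zero.2 h.symm
  have hdiff : ∀ σ τ, chordParam s t τ - chordParam s t σ = 2 / (t - s) * (τ - σ) := by
    intro σ τ
    unfold chordParam
    field_simp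
    ring
  simp only [crossRatio, hdiff]
  field_simp

variable {E : Type*} [NormedAddCommGroup E] [InnerProductSpace ℝ E] {u w : E}

lemma norm_add_smul_sq_of_chord (hst : s ≠ t) (hs : ‖u + s • w‖ = 1) (ht : ‖u + t • w‖ = 1)
    (σ : ℝ) : ‖u + σ • w‖ ^ 2 = 1 - ‖w‖ ^ 2 * ((σ - s) * (t - σ)) := by
  have hexpand : ∀ c : ℝ, ‖u + c • w‖ ^ 2 = ‖u‖ ^ 2 + 2 * c * inner ℝ u w + c ^ 2 * ‖w‖ ^ 2 := by
    intro c
    rw [norm_add_sq_real, real_inner_smul_right, norm_smul, mul_pow, Real.norm_eq_abs, sq_abs]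
    ring
  have hs' := hexpand s
  have ht' := hexpand t
  rw [hs, one_pow] at hs'
  rw [ht, one_pow] at ht'
  have hinner : 2 * inner ℝ u w = -(s + t) * ‖w‖ ^ 2 := by
    refine mul_left_cancel₀ (sub_ne_zero.2 hst) ?_
    linear_combination ht' - hs'
  rw [hexpand σ]
  linear_combination -hs' + (σ - s) * hinner

lemma abs_chordParam_le {lam σ : ℝ} (hst : s < t) (hs : ‖u + s • w‖ = 1) (ht : ‖u + t • w‖ = 1)
    (hlam : lam < 1) (hσ : ‖u + σ • w‖ ≤ lam) : |chordParam s t σ| ≤ lam := by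
  have hnorm := norm_add_smul_sq_of_chord hst.ne hs ht
  -- the chord's midpoint has nonnegative squared norm
  have hmid : ‖w‖ ^ 2 * (t - s) ^ 2 ≤ 4 := by
    nlinarith [hnorm ((s + t) / 2), sq_nonneg ‖u + ((s + t) / 2) • w‖]
  have hpos : 0 < ‖w‖ ^ 2 * ((σ - s) * (t - σ)) := by
    nlinarith [hnorm σ, norm_nonneg (u + σ • w)]
  have hP : 0 < (σ - s) * (t - σ) := pos_of_mul_pos_right hpos (sq_nonneg _)
  have hsq : chordParam s t σ ^ 2 = 1 - 4 * ((σ - s) * (t - σ)) / (t - s) ^ 2 := by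
    rw [chordParam, div_pow, eq_sub_iff_add_eq, ← add_div, div_eq_one_iff_eq (by positivity)]
    ring
  refine abs_le_of_sq_le_sq ?_ ((norm_nonneg _).trans hσ)
  calc chordParam s t σ ^ 2 ≤ ‖u + σ • w‖ ^ 2 := by
        rw [hsq, hnorm σ, sub_le_sub_iff_left, le_div_iff₀ (by nlinarith)]
        nlinarith
    _ ≤ lam ^ 2 := pow_le_pow_left₀ (norm_nonneg _) hσ 2

end Chord

lemma Continuous.norm_apply_le_of_norm_le_one {E F : Type*} [NormedAddCommGroup E]
    [NormedSpace ℝ E] [NormedAddCommGroup F] {f : E → F} {lam : ℝ} (hf : Continuous f)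
    (hball : ∀ x, ‖x‖ < 1 → ‖f x‖ ≤ lam) {z : E} (hz : ‖z‖ ≤ 1) : ‖f z‖ ≤ lam := by
  have hsub : closure (Metric.ball (0 : E) 1) ⊆ {x | ‖f x‖ ≤ lam} :=
    closure_minimal (fun x hx => hball x (mem_ball_zero_iff.1 hx))
      (isClosed_le (continuous_norm.comp hf) continuous_const)
  rw [closure_ball 0 one_ne_zero] at hsub
  exact hsub (mem_closedBall_zero_iff.2 hz)

section Klein

variable {d : ℕ} {x y : EuclideanSpace ℝ (Fin d)} {r : ℝ}

lemma kleinDistRel_self (hx : ‖x‖ < 1) (h : kleinDistRel x x r) : r = 0 := by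
  rcases h with ⟨-, hr⟩ | ⟨x', -, hx', -, ⟨s, -, rfl⟩, -⟩
  · exact hr
  · simp only [sub_self, smul_zero, add_zero] at hx'
    exact absurd hx' hx.ne

lemma kleinDistRel.exists_crossRatio (hxy : x ≠ y) (h : kleinDistRel x y r) :
    ∃ s t : ℝ, s < 0 ∧ 1 < t ∧ ‖x + s • (y - x)‖ = 1 ∧ ‖x + t • (y - x)‖ = 1 ∧
      r = 1 / 2 * log (crossRatio s 0 1 t) := by
  rcases h with ⟨hxy', -⟩ | ⟨x', y', hx', hy', ⟨s, hs, rfl⟩, ⟨t, ht, rfl⟩, rfl⟩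
  · exact absurd hxy' hxy
  refine ⟨s, t, hs, ht, hx', hy', ?_⟩
  have hv : 0 < ‖y - x‖ := norm_pos_iff.2 (sub_ne_zero.2 hxy.symm)
  have h₁ : x - (x + t • (y - x)) = (-t) • (y - x) := by module
  have h₂ : y - (x + s • (y - x)) = (1 - s) • (y - x) := by module
  have h₃ : x - (x + s • (y - x)) = (-s) • (y - x) := by module
  have h₄ : y - (x + t • (y - x)) = (1 - t) • (y - x) := by module
  rw [h₁, h₂, h₃, h₄]
  simp only [norm_smul, Real.norm_eq_abs, abs_neg, abs_of_pos (by linarith : (0 : ℝ) < t),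
    abs_of_pos (by linarith : (0 : ℝ) < 1 - s), abs_of_neg hs,
    abs_of_neg (by linarith : 1 - t < 0)]
  congr 2
  rw [crossRatio]
  field_simp
  ring

lemma kleinDistRel.nonneg (hx : ‖x‖ < 1) (h : kleinDistRel x y r) : 0 ≤ r := by
  by_cases hxy : x = y
  · subst hxy
    exact (kleinDistRel_self hx h).ge
  obtain ⟨s, t, hs, ht, -, -, rfl⟩ := h.exists_crossRatio hxy
  have := log_nonneg (one_le_crossRatio hs zero_le_one ht)
  positivity

end Klein

/-- If `f : ℝ^d → ℝ^d` is a linear map sending the open unit ball `𝕂^d` into the closed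
Euclidean ball of radius `λ < 1` centered at the origin, then `f` restricted to `𝕂^d` is
`λ`-Lipschitz with respect to the hyperbolic metric of the Klein model. -/
theorem linear_map_klein_lipschitz {d : ℕ} (lam : ℝ) (hlam : lam < 1)
    (f : EuclideanSpace ℝ (Fin d) →ₗ[ℝ] EuclideanSpace ℝ (Fin d))
    (hf : ∀ x : EuclideanSpace ℝ (Fin d), ‖x‖ < 1 → ‖f x‖ ≤ lam) :
    ∀ x y : EuclideanSpace ℝ (Fin d), ‖x‖ < 1 → ‖y‖ < 1 →
      ∀ r r' : ℝ, kleinDistRel x y r → kleinDistRel (f x) (f y) r' →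
        r' ≤ lam * r := by
  intro x y hx hy r r' hr hr'
  by_cases hfxy : f x = f y
  · rw [hfxy] at hr'
    rw [kleinDistRel_self ((hf y hy).trans_lt hlam) hr']
    exact mul_nonneg (by simpa using hf 0 (by simp)) (hr.nonneg hx)
  obtain ⟨s, t, hs, ht, hxs, hxt, rfl⟩ := hr.exists_crossRatio (fun h => hfxy (congrArg f h))
  obtain ⟨s', t', hs', ht', hfs', hft', rfl⟩ := hr'.exists_crossRatio hfxy
  have hst' : s' < t' := by linarith
  have hmap : ∀ σ : ℝ, f (x + σ • (y - x)) = f x + σ • (f y - f x) := by simp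
  have hclosed : ∀ z, ‖z‖ ≤ 1 → ‖f z‖ ≤ lam := fun _ =>
    f.continuous_of_finiteDimensional.norm_apply_le_of_norm_le_one hf
  have hνs := abs_le.1 <| abs_chordParam_le hst' hfs' hft' hlam (hmap s ▸ hclosed _ hxs.le)
  have hνt := abs_le.1 <| abs_chordParam_le hst' hfs' hft' hlam (hmap t ▸ hclosed _ hxt.le)
  have hν := chordParam_strictMono hst'
  have hcompare := log_crossRatio_le_mul hlam hνs.1 (hν hs) (hν one_pos).le (hν ht) hνt.2
  rw [← crossRatio_chordParam hst'.ne, ← crossRatio_chordParam hst'.ne s,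
    chordParam_left hst'.ne, chordParam_right hst'.ne]
  linarith
end
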